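/- Let ρ = Σ_{i,j∈{1,2}} λ_{ij} |e_i⟩⟨e_j| be a density matrix on ℂ², written in the standard basis e₁, e₂, whose off-diagonal coefficient λ₁₂ is real (hence λ₂₁ = λ₁₂). Then ρ is separable with respect to the bipartition (span_ℂ{1, σ₃}, span_ℂ{1, σ₁}) if and only if λ₁₁ ≥ |λ₁₂| and λ₂₂ ≥ |λ₁₂|. -/

import Mathlib

/-!
Since `σ₃σ₁ = iσ₂`, the expectation `⟨ψ, σ₃σ₁ψ⟩` of a unit vector `ψ = (x, y)` is purely
imaginary, while `⟨ψ, σ₃ψ⟩ ⟨ψ, σ₁ψ⟩ = (|x|² - |y|²) · 2 Re(x̄y)` is real. The defect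
`⟨ψ, αβψ⟩ - ⟨ψ, αψ⟩ ⟨ψ, βψ⟩` is bilinear in `(α, β)` and vanishes when `α` or `β` is `1`, so `ψ`
is separable iff these two numbers agree, i.e. iff `x̄y` is real and `(|x|² - |y|²) Re(x̄y) = 0`.
Either way `|Re(x ȳ)| ≤ min(|x|², |y|²)`, and this bound passes to convex combinations.
Conversely, `[[a, b], [b, d]]` with `|b| ≤ a, d` is `(a - |b|) |e₁⟩⟨e₁| + (d - |b|) |e₂⟩⟨e₂|
+ (|b| + b) |+⟩⟨+| + (|b| - b) |-⟩⟨-|` with `|±⟩ = (e₁ ± e₂)/√2`.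
-/

open Matrix
open scoped ComplexOrder

/-- The Pauli matrix `σ₁`. -/
def pauli1 : Matrix (Fin 2) (Fin 2) ℂ := !![0, 1; 1, 0]

/-- The Pauli matrix `σ₃`. -/
def pauli3 : Matrix (Fin 2) (Fin 2) ℂ := !![1, 0; 0, -1]

/-- The standard inner product on `ℂ²`. -/
noncomputable def ip2 (v w : Fin 2 → ℂ) : ℂ :=
  ∑ i : Fin 2, (starRingEnd ℂ) (v i) * w i

/-- A unit vector of `ℂ²` is separable (a product vector state) for the
bipartition `(span{1,σ₃}, span{1,σ₁})` of `C₂ ≅ M₂(ℂ)`. -/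
def IsSepVec (ψ : Fin 2 → ℂ) : Prop :=
  ip2 ψ ψ = 1 ∧
  ∀ α ∈ Submodule.span ℂ ({1, pauli3} : Set (Matrix (Fin 2) (Fin 2) ℂ)),
    ∀ β ∈ Submodule.span ℂ ({1, pauli1} : Set (Matrix (Fin 2) (Fin 2) ℂ)),
      ip2 ψ ((α * β).mulVec ψ) = ip2 ψ (α.mulVec ψ) * ip2 ψ (β.mulVec ψ)

/-- A density matrix on `ℂ²` is separable if it is a finite convex combination
of projectors `|ψ⟩⟨ψ|` onto separable unit vectors. -/
def IsSepDM (ρ : Matrix (Fin 2) (Fin 2) ℂ) : Prop :=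
  ∃ (n : ℕ) (μ : Fin n → ℝ) (ψ : Fin n → (Fin 2 → ℂ)),
    (∀ i, 0 ≤ μ i) ∧ (∑ i, μ i) = 1 ∧ (∀ i, IsSepVec (ψ i)) ∧
    ρ = ∑ i, (μ i : ℂ) • Matrix.vecMulVec (ψ i) (star (ψ i))

open ComplexConjugate

theorem LinearMap.apply_eq_zero_of_mem_span_of_mem_span {R M N P : Type*} [CommSemiring R]
    [AddCommMonoid M] [AddCommMonoid N] [AddCommMonoid P] [Module R M] [Module R N] [Module R P]
    (f : M →ₗ[R] N →ₗ[R] P) {s : Set M} {t : Set N} (h : ∀ x ∈ s, ∀ y ∈ t, f x y = 0)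
    {x : M} {y : N} (hx : x ∈ Submodule.span R s) (hy : y ∈ Submodule.span R t) : f x y = 0 := by
  have hmem := Submodule.apply_mem_map₂ f hx hy
  rwa [Submodule.map₂_span_span, Submodule.span_eq_bot.2, Submodule.mem_bot] at hmem
  rintro _ ⟨x, hx, y, hy, rfl⟩
  exact h x hx y hy

lemma ip2_eq_dotProduct (v w : Fin 2 → ℂ) : ip2 v w = star v ⬝ᵥ w := rfl

noncomputable def connectedCorr (ψ : Fin 2 → ℂ) :
    Matrix (Fin 2) (Fin 2) ℂ →ₗ[ℂ] Matrix (Fin 2) (Fin 2) ℂ →ₗ[ℂ] ℂ :=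
  LinearMap.mk₂ ℂ
    (fun α β => ip2 ψ ((α * β) *ᵥ ψ) - ip2 ψ (α *ᵥ ψ) * ip2 ψ (β *ᵥ ψ))
    (fun _ _ _ => by simp only [ip2_eq_dotProduct, add_mul, add_mulVec, dotProduct_add]; ring)
    (fun _ _ _ => by
      simp only [ip2_eq_dotProduct, smul_mul_assoc, smul_mulVec, dotProduct_smul, smul_eq_mul]
      ring)
    (fun _ _ _ => by simp only [ip2_eq_dotProduct, mul_add, add_mulVec, dotProduct_add]; ring)
    (fun _ _ _ => by
      simp only [ip2_eq_dotProduct, mul_smul_comm, smul_mulVec, dotProduct_smul, smul_eq_mul]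
      ring)

lemma isSepVec_iff_connectedCorr (ψ : Fin 2 → ℂ) :
    IsSepVec ψ ↔ ip2 ψ ψ = 1 ∧ connectedCorr ψ pauli3 pauli1 = 0 := by
  have hA : pauli3 ∈ Submodule.span ℂ ({1, pauli3} : Set (Matrix (Fin 2) (Fin 2) ℂ)) :=
    Submodule.subset_span (by simp)
  have hB : pauli1 ∈ Submodule.span ℂ ({1, pauli1} : Set (Matrix (Fin 2) (Fin 2) ℂ)) :=
    Submodule.subset_span (by simp)
  simp only [IsSepVec, connectedCorr, LinearMap.mk₂_apply, sub_eq_zero]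
  refine ⟨fun ⟨hn, h⟩ => ⟨hn, h _ hA _ hB⟩, fun ⟨hn, h⟩ => ⟨hn, fun α hα β hβ => ?_⟩⟩
  rw [← sub_eq_zero]
  refine (connectedCorr ψ).apply_eq_zero_of_mem_span_of_mem_span ?_ hα hβ
  rintro α (rfl | rfl) β (rfl | rfl) <;>
    simp only [connectedCorr, LinearMap.mk₂_apply, one_mul, mul_one, one_mulVec, hn, h, sub_self]

lemma ip2_self (ψ : Fin 2 → ℂ) :
    ip2 ψ ψ = ↑(Complex.normSq (ψ 0) + Complex.normSq (ψ 1)) := by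
  simp [ip2, Fin.sum_univ_two, Complex.normSq_eq_conj_mul_self]

lemma pauli3_mul_pauli1 : pauli3 * pauli1 = !![0, 1; -1, 0] := by
  simp [pauli1, pauli3]

lemma ip2_pauli3_mulVec (ψ : Fin 2 → ℂ) :
    ip2 ψ (pauli3 *ᵥ ψ) = ↑(Complex.normSq (ψ 0) - Complex.normSq (ψ 1)) := by
  simp only [ip2, pauli3, mulVec, dotProduct, Fin.sum_univ_two, of_apply, cons_val', cons_val_zero,
    cons_val_one, cons_val_fin_one, Complex.ofReal_sub, Complex.normSq_eq_conj_mul_self]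
  ring

lemma ip2_pauli1_mulVec (ψ : Fin 2 → ℂ) :
    ip2 ψ (pauli1 *ᵥ ψ) = ↑(2 * (conj (ψ 0) * ψ 1).re) := by
  simp only [← Complex.add_conj, ip2, pauli1, mulVec, dotProduct, Fin.sum_univ_two, of_apply,
    cons_val', cons_val_zero, cons_val_one, cons_val_fin_one, map_mul, Complex.conj_conj]
  ring

lemma ip2_pauli3_mul_pauli1_mulVec (ψ : Fin 2 → ℂ) :
    ip2 ψ ((pauli3 * pauli1) *ᵥ ψ) = ↑(2 * (conj (ψ 0) * ψ 1).im) * Complex.I := by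
  simp only [← Complex.sub_conj, pauli3_mul_pauli1, ip2, mulVec, dotProduct, Fin.sum_univ_two,
    of_apply, cons_val', cons_val_zero, cons_val_one, cons_val_fin_one, map_mul, Complex.conj_conj]
  ring

lemma isSepVec_iff (ψ : Fin 2 → ℂ) :
    IsSepVec ψ ↔ Complex.normSq (ψ 0) + Complex.normSq (ψ 1) = 1 ∧
      (Complex.normSq (ψ 0) - Complex.normSq (ψ 1)) * (conj (ψ 0) * ψ 1).re = 0 ∧
      (conj (ψ 0) * ψ 1).im = 0 := by
  rw [isSepVec_iff_connectedCorr, ip2_self, Complex.ofReal_eq_one, connectedCorr,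
    LinearMap.mk₂_apply, ip2_pauli3_mul_pauli1_mulVec, ip2_pauli3_mulVec, ip2_pauli1_mulVec,
    Complex.ext_iff]
  simp

lemma IsSepVec.abs_re_mul_conj_le {ψ : Fin 2 → ℂ} (h : IsSepVec ψ) (i : Fin 2) :
    |(ψ 0 * conj (ψ 1)).re| ≤ Complex.normSq (ψ i) := by
  obtain ⟨-, hprod, -⟩ := (isSepVec_iff ψ).1 h
  have hconj : (ψ 0 * conj (ψ 1)).re = (conj (ψ 0) * ψ 1).re := by
    rw [← Complex.conj_re, map_mul, Complex.conj_conj, mul_comm]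
  rw [hconj]
  rcases mul_eq_zero.1 hprod with heq | hre
  · have hamgm : ‖ψ 0‖ * ‖ψ 1‖ ≤ (Complex.normSq (ψ 0) + Complex.normSq (ψ 1)) / 2 := by
      rw [Complex.normSq_eq_norm_sq, Complex.normSq_eq_norm_sq]
      nlinarith [sq_nonneg (‖ψ 0‖ - ‖ψ 1‖)]
    calc |(conj (ψ 0) * ψ 1).re| ≤ ‖conj (ψ 0) * ψ 1‖ := Complex.abs_re_le_norm _
      _ = ‖ψ 0‖ * ‖ψ 1‖ := by rw [norm_mul, Complex.norm_conj]
      _ ≤ Complex.normSq (ψ i) := by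
        fin_cases i <;> simp only [Fin.zero_eta, Fin.mk_one, Fin.isValue] <;> linarith
  · rw [hre, abs_zero]
    exact Complex.normSq_nonneg _

lemma re_sum_smul_vecMulVec_apply {n : ℕ} (μ : Fin n → ℝ) (ψ : Fin n → Fin 2 → ℂ)
    (j k : Fin 2) :
    ((∑ m, (μ m : ℂ) • vecMulVec (ψ m) (star (ψ m))) j k).re =
      ∑ m, μ m * (ψ m j * conj (ψ m k)).re := by
  simp [Matrix.sum_apply, vecMulVec_apply, Complex.re_sum]

lemma IsSepDM.abs_re_apply_zero_one_le {ρ : Matrix (Fin 2) (Fin 2) ℂ} (h : IsSepDM ρ)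
    (i : Fin 2) :
    |(ρ 0 1).re| ≤ (ρ i i).re := by
  obtain ⟨n, μ, ψ, hμ, -, hψ, rfl⟩ := h
  simp only [re_sum_smul_vecMulVec_apply, Complex.mul_conj, Complex.ofReal_re]
  calc |∑ m, μ m * (ψ m 0 * conj (ψ m 1)).re|
      ≤ ∑ m, |μ m * (ψ m 0 * conj (ψ m 1)).re| := Finset.abs_sum_le_sum_abs _ _
    _ ≤ ∑ m, μ m * Complex.normSq (ψ m i) := Finset.sum_le_sum fun m _ => by
      rw [abs_mul, abs_of_nonneg (hμ m)]
      exact mul_le_mul_of_nonneg_left ((hψ m).abs_re_mul_conj_le i) (hμ m)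

lemma isSepDM_of_abs_le {a b d : ℝ} (hsum : a + d = 1) (ha : |b| ≤ a) (hd : |b| ≤ d) :
    IsSepDM !![(a : ℂ), b; b, d] := by
  set r : ℝ := (√2)⁻¹
  have hr : r * r = 1 / 2 := by
    rw [← mul_inv, Real.mul_self_sqrt zero_le_two, one_div]
  have hrc : (r : ℂ) * r = 1 / 2 := by rw [← Complex.ofReal_mul, hr]; norm_num
  refine ⟨4, ![a - |b|, d - |b|, |b| + b, |b| - b],
    ![![1, 0], ![0, 1], ![(r : ℂ), r], ![(r : ℂ), -r]], ?_, ?_, ?_, ?_⟩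
  · intro i
    fin_cases i <;> simp only [Fin.reduceFinMk, cons_val, sub_nonneg] <;>
      linarith [neg_abs_le b, le_abs_self b]
  · simp only [Fin.sum_univ_four, Fin.isValue, cons_val_zero, cons_val_one, cons_val]
    linarith
  · intro i
    fin_cases i <;> norm_num [isSepVec_iff, hr]
  · ext i j
    fin_cases i <;> fin_cases j <;>
      simp only [Fin.zero_eta, Fin.mk_one, Fin.isValue, of_apply, cons_val', cons_val_zero,
        cons_val_one, cons_val_fin_one, Matrix.sum_apply, Fin.sum_univ_four, Matrix.smul_apply,
        vecMulVec_apply, Pi.star_apply, Complex.star_def, Complex.conj_ofReal, map_one, map_zero,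
        map_neg, smul_eq_mul, cons_val, Complex.ofReal_sub, Complex.ofReal_add, mul_neg, neg_mul,
        hrc] <;>
      ring

lemma Matrix.IsHermitian.eq_of_im_apply_zero_one_eq_zero {ρ : Matrix (Fin 2) (Fin 2) ℂ}
    (hρ : ρ.IsHermitian) (him : (ρ 0 1).im = 0) :
    ρ = !![((ρ 0 0).re : ℂ), (ρ 0 1).re; (ρ 0 1).re, (ρ 1 1).re] := by
  have h01 : ((ρ 0 1).re : ℂ) = ρ 0 1 := Complex.ext rfl (by simp [him])
  have h10 : ρ 1 0 = ρ 0 1 := by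
    rw [← hρ.apply 1 0, ← h01, Complex.star_def, Complex.conj_ofReal]
  have hdiag (i : Fin 2) : ((ρ i i).re : ℂ) = ρ i i := hρ.coe_re_apply_self i
  ext i j
  fin_cases i <;> fin_cases j <;> simp [hdiag, h01, h10]

/-- **Lemma 6**: a density matrix on `ℂ²` with real off-diagonal coefficient
`λ₁₂` is separable with respect to the bipartition `(span{1,σ₃}, span{1,σ₁})`
iff `λ₁₁ ≥ |λ₁₂|` and `λ₂₂ ≥ |λ₁₂|`. -/
theorem real_offdiagonal_separable_iff
    (ρ : Matrix (Fin 2) (Fin 2) ℂ) (hpos : ρ.PosSemidef) (htr : ρ.trace = 1)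
    (him : (ρ 0 1).im = 0) :
    IsSepDM ρ ↔
      (|(ρ 0 1).re| ≤ (ρ 0 0).re ∧ |(ρ 0 1).re| ≤ (ρ 1 1).re) := by
  refine ⟨fun h => ⟨h.abs_re_apply_zero_one_le 0, h.abs_re_apply_zero_one_le 1⟩, ?_⟩
  rintro ⟨h0, h1⟩
  have hsum : (ρ 0 0).re + (ρ 1 1).re = 1 := by
    simpa [trace_fin_two] using congrArg Complex.re htr
  rw [hpos.isHermitian.eq_of_im_apply_zero_one_eq_zero him]
  exact isSepDM_of_abs_le hsum h0 h1
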